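/- arXiv:1609.05086 — 3 statements merged into one kernel-verified Lean document; each statement's English description precedes it below -/
import Mathlib

section
/- Let G be a discrete group. If G has a non-amenable subgroup H such that for every h ∈ G ∖ {e} the group {g ∈ H : ghg⁻¹ = h} is amenable, then G is not inner amenable. -/
/-!
An invariant mean `m` on `G ∖ {e}` for the conjugation action of `G` is in particular invariant
under `H`, whose stabilizers are the amenable groups `H ∩ C_G(x)`. Fix a point `ρ x` in each
`H`-orbit, some `d x ∈ H` with `d x • ρ x = x`, and an invariant mean `μ_y` on the stabilizer of
each `y`. Then `A ↦ ∫ μ_{ρ x} {k | d x * k ∈ A} dm(x)` is a left-invariant mean on `H`: the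
integrand at `h⁻¹ • x` differs from the one at `x` only by the choice of `d` inside a coset of the
stabilizer of `ρ x`, which `μ_{ρ x}` does not see. Integrals of `[0, 1]`-valued functions against a
finitely additive probability are limits of the dyadic lower sums
`2⁻ⁿ ∑_{k < 2ⁿ} m {f ≥ (k + 1) / 2ⁿ}`.
-/

noncomputable section

/-- A group is amenable if there is a finitely additive probability measure, defined on
all subsets of `G`, which is invariant under left translation. -/
def AmenableGroup (G : Type*) [Group G] : Prop :=
  ∃ m : Set G → ℝ,
    (∀ A, 0 ≤ m A) ∧ m Set.univ = 1 ∧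
    (∀ A B, Disjoint A B → m (A ∪ B) = m A + m B) ∧
    ∀ (g : G) (A : Set G), m ((fun x => g * x) '' A) = m A

lemma conj_ne_one' {G : Type*} [Group G] (g : G) {x : G} (hx : x ≠ 1) :
    g * x * g⁻¹ ≠ 1 := by
  intro h
  apply hx
  have h' := congrArg (fun y => g⁻¹ * y * g) h
  simpa [mul_assoc] using h'

/-- A discrete group `G` is inner amenable if there is a finitely additive probability
measure, defined on all subsets of `G \ {e}`, which is invariant under the conjugation
action of `G`. -/
def InnerAmenable (G : Type*) [Group G] : Prop :=
  ∃ m : Set {x : G // x ≠ 1} → ℝ,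
    (∀ A, 0 ≤ m A) ∧ m Set.univ = 1 ∧
    (∀ A B, Disjoint A B → m (A ∪ B) = m A + m B) ∧
    ∀ (g : G) (A : Set {x : G // x ≠ 1}),
      m ((fun x : {x : G // x ≠ 1} =>
        (⟨g * ↑x * g⁻¹, conj_ne_one' g x.2⟩ : {x : G // x ≠ 1})) '' A) = m A

structure IsFinitelyAdditiveProbability {X : Type*} (m : Set X → ℝ) : Prop where
  nonneg : ∀ A, 0 ≤ m A
  univ : m Set.univ = 1
  union : ∀ A B, Disjoint A B → m (A ∪ B) = m A + m B

theorem Nat.le_floor_add {R : Type*} [Ring R] [LinearOrder R] [IsStrictOrderedRing R]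
    [FloorSemiring R] {a b : R} (ha : 0 ≤ a) (hb : 0 ≤ b) : ⌊a⌋₊ + ⌊b⌋₊ ≤ ⌊a + b⌋₊ :=
  Nat.le_floor (by rw [Nat.cast_add]; exact _root_.add_le_add (Nat.floor_le ha) (Nat.floor_le hb))

theorem Nat.floor_add_le_add_one {R : Type*} [Ring R] [LinearOrder R] [IsStrictOrderedRing R]
    [FloorSemiring R] {a b : R} (ha : 0 ≤ a) (hb : 0 ≤ b) : ⌊a + b⌋₊ ≤ ⌊a⌋₊ + ⌊b⌋₊ + 1 :=
  Nat.lt_succ_iff.1 <| (Nat.floor_lt (add_nonneg ha hb)).2 <| by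
    push_cast
    exact (_root_.add_lt_add (Nat.lt_floor_add_one a) (Nat.lt_floor_add_one b)).trans_eq (by abel)

namespace FinitelyAdditive

variable {X : Type*}

/-- For `φ ≤ N` this is the integral of `φ`, by the layer-cake formula. -/
def layerSum (m : Set X → ℝ) (N : ℕ) (φ : X → ℕ) : ℝ :=
  ∑ k ∈ Finset.range N, m {x | k < φ x}

def dyadicFloor (n : ℕ) (f : X → ℝ) (x : X) : ℕ := ⌊2 ^ n * f x⌋₊

def dyadicSum (m : Set X → ℝ) (n : ℕ) (f : X → ℝ) : ℝ :=
  layerSum m (2 ^ n) (dyadicFloor n f) / 2 ^ n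

/-- Meaningful for `0 ≤ f ≤ 1`, where the dyadic sums increase to it. -/
def integral (m : Set X → ℝ) (f : X → ℝ) : ℝ := ⨆ n, dyadicSum m n f

theorem dyadicFloor_le {f : X → ℝ} (hf : ∀ x, f x ≤ 1) (n : ℕ) (x : X) :
    dyadicFloor n f x ≤ 2 ^ n :=
  Nat.floor_le_of_le (by push_cast; exact mul_le_of_le_one_right (by positivity) (hf x))

theorem two_mul_dyadicFloor_le {f : X → ℝ} (hf : ∀ x, 0 ≤ f x) (n : ℕ) (x : X) :
    2 * dyadicFloor n f x ≤ dyadicFloor (n + 1) f x := by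
  refine Nat.le_floor ?_
  have := Nat.floor_le (mul_nonneg (pow_nonneg zero_le_two n) (hf x))
  push_cast
  rw [pow_succ]
  unfold dyadicFloor
  linarith

theorem dyadicFloor_add_le_add_one {f g : X → ℝ} (hf : ∀ x, 0 ≤ f x) (hg : ∀ x, 0 ≤ g x)
    (n : ℕ) (x : X) :
    dyadicFloor n (fun x => f x + g x) x ≤ dyadicFloor n f x + dyadicFloor n g x + 1 := by
  simp only [dyadicFloor, mul_add]
  exact Nat.floor_add_le_add_one (by have := hf x; positivity) (by have := hg x; positivity)

theorem le_dyadicFloor_add {f g : X → ℝ} (hf : ∀ x, 0 ≤ f x) (hg : ∀ x, 0 ≤ g x)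
    (n : ℕ) (x : X) :
    dyadicFloor n f x + dyadicFloor n g x ≤ dyadicFloor n (fun x => f x + g x) x := by
  simp only [dyadicFloor, mul_add]
  exact Nat.le_floor_add (by have := hf x; positivity) (by have := hg x; positivity)

theorem integral_comp {m : Set X → ℝ} (σ : X → X) (hσ : ∀ S, m (σ ⁻¹' S) = m S) (f : X → ℝ) :
    integral m (fun x => f (σ x)) = integral m f := by
  simp only [integral, dyadicSum, layerSum]
  congr! 4 with n k
  exact hσ {x | k < dyadicFloor n f x}

end FinitelyAdditive

namespace IsFinitelyAdditiveProbability

open Set Finset Filter Topology FinitelyAdditive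

variable {X Y : Type*} {m : Set X → ℝ} (hm : IsFinitelyAdditiveProbability m)
include hm

theorem empty : m ∅ = 0 := by
  have := hm.union ∅ ∅ (Set.disjoint_empty _)
  rw [Set.empty_union] at this
  linarith

theorem mono {A B : Set X} (hAB : A ⊆ B) : m A ≤ m B := by
  have := hm.union A (B \ A) disjoint_sdiff_right
  rw [Set.union_sdiff_cancel hAB] at this
  linarith [hm.nonneg (B \ A)]

theorem le_one (A : Set X) : m A ≤ 1 := hm.univ ▸ hm.mono (Set.subset_univ A)

theorem map (f : X → Y) : IsFinitelyAdditiveProbability fun A : Set Y => m (f ⁻¹' A) where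
  nonneg _ := hm.nonneg _
  univ := hm.univ
  union _ _ hAB := hm.union _ _ (hAB.preimage f)

theorem sum_range_inter_fiber (A : Set X) (φ : X → ℕ) (n : ℕ) :
    ∑ j ∈ range n, m (A ∩ {x | φ x = j}) = m (A ∩ {x | φ x < n}) := by
  induction n with
  | zero => simp [hm.empty]
  | succ n ih =>
    rw [sum_range_succ, ih, ← hm.union]
    · congr 1
      ext x
      simp only [mem_union, mem_inter_iff, mem_ofPred_eq, Nat.lt_succ_iff_lt_or_eq, and_or_left]
    · exact Set.disjoint_left.2 fun x hx hx' => by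
        simp only [mem_inter_iff, mem_ofPred_eq] at hx hx'
        omega

theorem layerSum_eq_of_le {φ : X → ℕ} {N M : ℕ} (hφ : ∀ x, φ x ≤ N) (hNM : N ≤ M) :
    layerSum m M φ = layerSum m N φ := by
  refine (sum_subset (range_subset_range.2 hNM) fun k _ hk => ?_).symm
  have : {x | k < φ x} = ∅ := eq_empty_of_forall_notMem fun x hx => by
    simp only [Finset.mem_range, mem_ofPred_eq] at hk hx
    exact hk (hx.trans_le (hφ x))
  rw [this, hm.empty]

theorem layerSum_nonneg (N : ℕ) (φ : X → ℕ) : 0 ≤ layerSum m N φ :=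
  sum_nonneg fun _ _ => hm.nonneg _

theorem layerSum_le (N : ℕ) (φ : X → ℕ) : layerSum m N φ ≤ N :=
  (sum_le_card_nsmul _ _ 1 fun _ _ => hm.le_one _).trans_eq (by simp)

theorem layerSum_mono {N : ℕ} {φ ψ : X → ℕ} (hφψ : ∀ x, φ x ≤ ψ x) :
    layerSum m N φ ≤ layerSum m N ψ :=
  sum_le_sum fun _ _ => hm.mono fun x hx => lt_of_lt_of_le hx (hφψ x)

theorem layerSum_add_indicator {N : ℕ} {φ : X → ℕ} (hφ : ∀ x, φ x < N) (A : Set X) :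
    layerSum m N (φ + A.indicator 1) = layerSum m N φ + m A := by
  have hterm (k : ℕ) : m {x | k < (φ + A.indicator 1 : X → ℕ) x} =
      m {x | k < φ x} + m (A ∩ {x | φ x = k}) := by
    rw [← hm.union]
    · congr 1
      ext x
      by_cases hx : x ∈ A <;> simp [hx]
      omega
    · exact Set.disjoint_left.2 fun x hx hx' => by
        simp only [mem_inter_iff, mem_ofPred_eq] at hx hx'
        omega
  simp only [layerSum, hterm, sum_add_distrib, hm.sum_range_inter_fiber]
  congr 2
  exact Set.inter_eq_left.2 fun x _ => hφ x

theorem layerSum_add {N N' M : ℕ} {φ ψ : X → ℕ} (hφ : ∀ x, φ x ≤ N) (hψ : ∀ x, ψ x ≤ N')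
    (hM : N + N' ≤ M) : layerSum m M (φ + ψ) = layerSum m M φ + layerSum m M ψ := by
  -- add `ψ` one layer `{r < ψ}` at a time
  have partial_add (r : ℕ) (hr : r ≤ N') :
      layerSum m M (φ + fun x => min (ψ x) r) = layerSum m M φ + layerSum m r ψ := by
    induction r with
    | zero => simp [layerSum]
    | succ r ih =>
      have hlayer : (φ + fun x => min (ψ x) (r + 1)) =
          (φ + fun x => min (ψ x) r) + {x | r < ψ x}.indicator 1 := by
        ext x
        by_cases hx : r < ψ x <;> simp [hx] <;> omega
      have hbound (x : X) : (φ + fun x => min (ψ x) r) x < M := by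
        have := hφ x
        simp only [Pi.add_apply]
        omega
      rw [hlayer, hm.layerSum_add_indicator hbound, ih (by omega), add_assoc]
      simp only [layerSum, sum_range_succ]
  have hψ_min : (fun x => min (ψ x) N') = ψ := funext fun x => min_eq_left (hψ x)
  rw [← hψ_min, partial_add N' le_rfl, hψ_min, hm.layerSum_eq_of_le (M := M) hψ (by omega)]

theorem layerSum_const (N : ℕ) : layerSum m N (fun _ => N) = N := by
  have hterm : ∀ k ∈ range N, m {_x : X | k < N} = 1 := fun k hk => by
    simp [Finset.mem_range.1 hk, hm.univ]
  rw [layerSum, sum_congr rfl hterm]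
  simp

theorem dyadicSum_eq {f : X → ℝ} (hf : ∀ x, f x ≤ 1) {n M : ℕ} (hM : 2 ^ n ≤ M) :
    dyadicSum m n f = layerSum m M (dyadicFloor n f) / 2 ^ n := by
  rw [dyadicSum, hm.layerSum_eq_of_le (dyadicFloor_le hf n) hM]

theorem dyadicSum_nonneg (n : ℕ) (f : X → ℝ) : 0 ≤ dyadicSum m n f :=
  div_nonneg (hm.layerSum_nonneg _ _) (by positivity)

theorem dyadicSum_le_one (n : ℕ) (f : X → ℝ) : dyadicSum m n f ≤ 1 :=
  div_le_one_of_le₀ (by exact_mod_cast hm.layerSum_le _ _) (by positivity)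

theorem dyadicSum_le_succ {f : X → ℝ} (hf0 : ∀ x, 0 ≤ f x) (hf1 : ∀ x, f x ≤ 1) (n : ℕ) :
    dyadicSum m n f ≤ dyadicSum m (n + 1) f := by
  have hM : 2 ^ n + 2 ^ n ≤ 2 ^ (n + 1) := (Nat.two_pow_succ n).ge
  have hdouble : 2 * layerSum m (2 ^ (n + 1)) (dyadicFloor n f) ≤
      layerSum m (2 ^ (n + 1)) (dyadicFloor (n + 1) f) := by
    rw [two_mul, ← hm.layerSum_add (dyadicFloor_le hf1 n) (dyadicFloor_le hf1 n) hM]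
    exact hm.layerSum_mono fun x => by
      simpa only [Pi.add_apply, two_mul] using two_mul_dyadicFloor_le hf0 n x
  rw [hm.dyadicSum_eq hf1 (le_trans (Nat.le_add_right _ _) hM), dyadicSum,
    div_le_div_iff₀ (by positivity) (by positivity), pow_succ (2 : ℝ)]
  nlinarith [mul_le_mul_of_nonneg_right hdouble (pow_nonneg zero_le_two n : (0 : ℝ) ≤ 2 ^ n)]

theorem tendsto_dyadicSum {f : X → ℝ} (hf0 : ∀ x, 0 ≤ f x) (hf1 : ∀ x, f x ≤ 1) :
    Tendsto (fun n => dyadicSum m n f) atTop (𝓝 (integral m f)) :=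
  tendsto_atTop_ciSup (monotone_nat_of_le_succ (hm.dyadicSum_le_succ hf0 hf1))
    ⟨1, forall_mem_range.2 (hm.dyadicSum_le_one · f)⟩

theorem integral_nonneg (f : X → ℝ) : 0 ≤ integral m f :=
  le_ciSup_of_le ⟨1, forall_mem_range.2 (hm.dyadicSum_le_one · f)⟩ 0 (hm.dyadicSum_nonneg 0 f)

theorem integral_one : integral m (fun _ => 1) = 1 := by
  have hfloor (n : ℕ) : dyadicFloor n (fun _ : X => (1 : ℝ)) = fun _ => 2 ^ n := by
    ext x
    simp only [dyadicFloor, mul_one]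
    exact_mod_cast Nat.floor_natCast (R := ℝ) (2 ^ n)
  simp only [integral, dyadicSum, hfloor, hm.layerSum_const]
  simp

theorem add_dyadicSum_le {f g : X → ℝ} (hf : ∀ x, 0 ≤ f x) (hg : ∀ x, 0 ≤ g x)
    (hfg : ∀ x, f x + g x ≤ 1) (n : ℕ) :
    dyadicSum m n f + dyadicSum m n g ≤ dyadicSum m n (fun x => f x + g x) := by
  have hf1 (x : X) : f x ≤ 1 := by linarith [hfg x, hg x]
  have hg1 (x : X) : g x ≤ 1 := by linarith [hfg x, hf x]
  have hM : 2 ^ n + 2 ^ n ≤ 2 ^ (n + 1) := (Nat.two_pow_succ n).ge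
  have hM' : 2 ^ n ≤ 2 ^ (n + 1) := le_trans (Nat.le_add_right _ _) hM
  rw [hm.dyadicSum_eq hf1 hM', hm.dyadicSum_eq hg1 hM', hm.dyadicSum_eq hfg hM', ← add_div,
    ← hm.layerSum_add (dyadicFloor_le hf1 n) (dyadicFloor_le hg1 n) hM]
  gcongr
  exact hm.layerSum_mono (le_dyadicFloor_add hf hg n)

theorem dyadicSum_add_le {f g : X → ℝ} (hf : ∀ x, 0 ≤ f x) (hg : ∀ x, 0 ≤ g x)
    (hfg : ∀ x, f x + g x ≤ 1) (n : ℕ) :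
    dyadicSum m n (fun x => f x + g x) ≤ dyadicSum m n f + dyadicSum m n g + 1 / 2 ^ n := by
  have hf1 (x : X) : f x ≤ 1 := by linarith [hfg x, hg x]
  have hg1 (x : X) : g x ≤ 1 := by linarith [hfg x, hf x]
  have hM : 2 ^ n + 2 ^ n ≤ 2 ^ (n + 1) := (Nat.two_pow_succ n).ge
  have hsum_lt (x : X) : (dyadicFloor n f + dyadicFloor n g) x < 2 ^ (n + 1) + 1 :=
    Nat.lt_succ_of_le ((add_le_add (dyadicFloor_le hf1 n x) (dyadicFloor_le hg1 n x)).trans hM)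
  have hM' : 2 ^ n + 2 ^ n ≤ 2 ^ (n + 1) + 1 := hM.trans (Nat.le_succ _)
  have hM'' : 2 ^ n ≤ 2 ^ (n + 1) + 1 := (Nat.le_add_right _ _).trans hM'
  rw [hm.dyadicSum_eq hf1 hM'', hm.dyadicSum_eq hg1 hM'', hm.dyadicSum_eq hfg hM'', ← add_div,
    ← add_div, ← hm.layerSum_add (dyadicFloor_le hf1 n) (dyadicFloor_le hg1 n) hM',
    ← hm.univ, ← hm.layerSum_add_indicator hsum_lt, indicator_univ]
  gcongr
  exact hm.layerSum_mono (dyadicFloor_add_le_add_one hf hg n)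

theorem integral_add {f g : X → ℝ} (hf : ∀ x, 0 ≤ f x) (hg : ∀ x, 0 ≤ g x)
    (hfg : ∀ x, f x + g x ≤ 1) :
    integral m (fun x => f x + g x) = integral m f + integral m g := by
  have hf1 (x : X) : f x ≤ 1 := by linarith [hfg x, hg x]
  have hg1 (x : X) : g x ≤ 1 := by linarith [hfg x, hf x]
  have hlim := (hm.tendsto_dyadicSum hf hf1).add (hm.tendsto_dyadicSum hg hg1)
  have hlim' : Tendsto (fun n => dyadicSum m n f + dyadicSum m n g + 1 / 2 ^ n) atTop
      (𝓝 (integral m f + integral m g)) := by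
    have hsmall : Tendsto (fun n : ℕ => (1 : ℝ) / 2 ^ n) atTop (𝓝 0) := by
      simpa only [one_div_pow] using
        tendsto_pow_atTop_nhds_zero_of_lt_one (by norm_num : (0 : ℝ) ≤ 1 / 2) (by norm_num)
    simpa using hlim.add hsmall
  exact tendsto_nhds_unique (hm.tendsto_dyadicSum (fun x => add_nonneg (hf x) (hg x)) hfg)
    (tendsto_of_tendsto_of_tendsto_of_le_of_le hlim hlim' (hm.add_dyadicSum_le hf hg hfg)
      (hm.dyadicSum_add_le hf hg hfg))

theorem bind {F : X → Set Y → ℝ} (hF : ∀ x, IsFinitelyAdditiveProbability (F x)) :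
    IsFinitelyAdditiveProbability fun A => integral m fun x => F x A where
  nonneg _ := hm.integral_nonneg _
  univ := by simpa only [(hF _).univ] using hm.integral_one
  union A B hAB := by
    simp only [(hF _).union A B hAB]
    exact hm.integral_add (fun x => (hF x).nonneg A) (fun x => (hF x).nonneg B)
      fun x => (hF x).union A B hAB ▸ (hF x).le_one _

end IsFinitelyAdditiveProbability

open MulAction

def AmenableAction (H X : Type*) [Group H] [MulAction H X] : Prop :=
  ∃ m : Set X → ℝ, IsFinitelyAdditiveProbability m ∧
    ∀ (h : H) (A : Set X), m ((fun x => h • x) '' A) = m A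

theorem AmenableGroup.of_mulEquiv {G G' : Type*} [Group G] [Group G'] (e : G ≃* G')
    (hG : AmenableGroup G) : AmenableGroup G' := by
  obtain ⟨m, h0, h1, hadd, hinv⟩ := hG
  refine ⟨fun A => m (e ⁻¹' A), fun A => h0 _, h1, fun A B hAB => hadd _ _ (hAB.preimage e),
    fun g A => ?_⟩
  show m (e ⁻¹' _) = m (e ⁻¹' A)
  rw [← hinv (e.symm g) (e ⁻¹' A)]
  congr 1
  ext x
  simp [Set.image_mul_left]

theorem mean_preimage_mul_left_eq {H : Type*} [Group H] {K : Subgroup H} {μ : Set K → ℝ}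
    (hμ : ∀ (c : K) (S : Set K), μ ((fun k => c * k) '' S) = μ S) {a b : H} (hab : a⁻¹ * b ∈ K)
    (A : Set H) : μ ((fun k : K => a * k) ⁻¹' A) = μ ((fun k : K => b * k) ⁻¹' A) := by
  rw [← hμ ⟨a⁻¹ * b, hab⟩ ((fun k : K => b * k) ⁻¹' A), Set.image_mul_left]
  congr 1
  ext k
  simp [mul_assoc]

theorem MulAction.exists_orbit_section (H X : Type*) [Group H] [MulAction H X] :
    ∃ (ρ : X → X) (d : X → H), (∀ (h : H) (x : X), ρ (h • x) = ρ x) ∧ ∀ x, d x • ρ x = x := by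
  have hrep (x : X) : ∃ h : H, h • (Quotient.mk (orbitRel H X) x).out = x :=
    (orbitRel H X).symm (Quotient.mk_out (s := orbitRel H X) x)
  choose d hd using hrep
  exact ⟨fun x => (Quotient.mk (orbitRel H X) x).out, d,
    fun h x => congrArg Quotient.out (Quotient.sound (mem_orbit x h)), hd⟩

section StabilizerMeans

variable {H X : Type*} [Group H] [MulAction H X]

def translatedStabilizerMean (μ : ∀ x : X, Set (stabilizer H x) → ℝ) (ρ : X → X) (d : X → H)
    (x : X) (A : Set H) : ℝ :=
  μ (ρ x) ((fun k : stabilizer H (ρ x) => d x * k) ⁻¹' A)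

theorem translatedStabilizerMean_mul_left {μ : ∀ x : X, Set (stabilizer H x) → ℝ} {ρ : X → X}
    {d : X → H} (hμ : ∀ x (c : stabilizer H x) (S : Set (stabilizer H x)),
      μ x ((fun k => c * k) '' S) = μ x S)
    (hρ : ∀ (h : H) (x : X), ρ (h • x) = ρ x) (hd : ∀ x, d x • ρ x = x) (h : H) (A : Set H)
    (x : X) :
    translatedStabilizerMean μ ρ d x ((fun a => h * a) '' A) =
      translatedStabilizerMean μ ρ d (h⁻¹ • x) A := by
  have hmem : (h⁻¹ * d x)⁻¹ * d (h⁻¹ • x) ∈ stabilizer H (ρ x) := by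
    rw [mem_stabilizer_iff, mul_smul, inv_smul_eq_iff, mul_smul, hd, ← hρ h⁻¹ x, hd]
  have hpre : (fun k : stabilizer H (ρ x) => d x * k) ⁻¹' ((fun a => h * a) '' A) =
      (fun k : stabilizer H (ρ x) => h⁻¹ * d x * k) ⁻¹' A := by
    ext k
    simp [Set.image_mul_left, mul_assoc]
  rw [translatedStabilizerMean, translatedStabilizerMean, hpre, hρ]
  exact mean_preimage_mul_left_eq (hμ _) hmem A

theorem AmenableAction.amenableGroup_of_stabilizers (hX : AmenableAction H X)
    (hstab : ∀ x : X, AmenableGroup (stabilizer H x)) : AmenableGroup H := by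
  obtain ⟨m, hm, hm_inv⟩ := hX
  choose μ hμ0 hμ1 hμadd hμ_inv using hstab
  obtain ⟨ρ, d, hρ, hd⟩ := exists_orbit_section H X
  have hF (x : X) : IsFinitelyAdditiveProbability (translatedStabilizerMean μ ρ d x) :=
    IsFinitelyAdditiveProbability.map ⟨hμ0 (ρ x), hμ1 (ρ x), hμadd (ρ x)⟩ _
  have hν := hm.bind hF
  refine ⟨_, hν.nonneg, hν.univ, hν.union, fun h A => ?_⟩
  rw [funext (translatedStabilizerMean_mul_left hμ_inv hρ hd h A)]
  refine FinitelyAdditive.integral_comp (fun x => h⁻¹ • x) (fun S => ?_)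
    (fun x => translatedStabilizerMean μ ρ d x A)
  rw [Set.preimage_smul_inv, ← Set.image_smul, hm_inv]

end StabilizerMeans

instance Subgroup.conjActionNeOne {G : Type*} [Group G] (H : Subgroup G) :
    MulAction H {x : G // x ≠ 1} where
  smul h x := ⟨(h : G) * x * (h : G)⁻¹, conj_ne_one' (h : G) x.2⟩
  one_smul x := Subtype.ext (by show ((1 : H) : G) * x * ((1 : H) : G)⁻¹ = x; simp)
  mul_smul h k x := Subtype.ext (by
    show ((h * k : H) : G) * x * ((h * k : H) : G)⁻¹ = h * (k * x * (k : G)⁻¹) * (h : G)⁻¹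
    simp [mul_assoc])

theorem Subgroup.stabilizer_conjActionNeOne {G : Type*} [Group G] (H : Subgroup G)
    (x : {x : G // x ≠ 1}) :
    stabilizer H x = (H ⊓ Subgroup.centralizer {(x : G)}).subgroupOf H := by
  ext h
  rw [mem_stabilizer_iff, Subgroup.mem_subgroupOf, Subgroup.mem_inf,
    Subgroup.mem_centralizer_singleton_iff, Subtype.ext_iff]
  show (h : G) * x * (h : G)⁻¹ = x ↔ _
  rw [mul_inv_eq_iff_eq_mul, eq_comm]
  exact (and_iff_right h.2).symm

/-- If a discrete group `G` has a non-amenable subgroup `H` such that for every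
`h ∈ G \ {e}` the group `{g ∈ H : g h g⁻¹ = h}` is amenable, then `G` is not inner
amenable. -/
theorem not_innerAmenable_of_subgroup {G : Type*} [Group G] (H : Subgroup G)
    (hH : ¬ AmenableGroup ↥H)
    (hcent : ∀ h : G, h ≠ 1 → AmenableGroup ↥(H ⊓ Subgroup.centralizer {h})) :
    ¬ InnerAmenable G := by
  rintro ⟨m, hm0, hm1, hmadd, hm_inv⟩
  have hconj : AmenableAction H {x : G // x ≠ 1} :=
    ⟨m, ⟨hm0, hm1, hmadd⟩, fun h A => hm_inv h A⟩
  refine hH (hconj.amenableGroup_of_stabilizers fun x => ?_)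
  rw [H.stabilizer_conjActionNeOne x]
  exact (hcent x x.2).of_mulEquiv (Subgroup.subgroupOfEquivOfLe inf_le_left).symm
end
end

section
/- Suppose ψ : ℚ ∪ {±∞} → ℝ is strictly increasing and satisfies ψ(−∞) = −1/2, ψ(0) = 0, ψ(∞) = 1/2, and ψ(p/q ⊕ r/s) = (ψ(p/q) + ψ(r/s))/2 whenever p/q and r/s are consecutive Farey numbers. Then ψ(−x) = −ψ(x) for every x ∈ ℚ ∪ {±∞}, and ψ(1/x) = 1/2 − ψ(x) for every x ∈ ℚ ∪ {∞} with x ≥ 0 (with the conventions 1/0 = ∞ and 1/∞ = 0). -/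
/-! A function on `ℚ ∪ {±∞}` obeying the mediant rule is determined on `[0, ∞]` by its values
at `0` and `∞`: every positive rational is reached from `0/1` and `1/0` by iterated mediants of
consecutive Farey fractions (the Stern–Brocot tree), and the parents of a fraction have smaller
height. Negation and inversion map consecutive Farey pairs to consecutive Farey pairs and mediants
to mediants, so `x ↦ -ψ(-x)` and `x ↦ 1/2 - ψ(1/x)` obey the mediant rule on `[0, ∞]` as well;
they agree with `ψ` at `0` and `∞`, hence everywhere on `[0, ∞]`. -/

noncomputable section

/-- The inclusion of `ℚ` into `ℚ ∪ {±∞}`. -/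
def rc (q : ℚ) : WithBot (WithTop ℚ) := ((q : WithTop ℚ) : WithBot (WithTop ℚ))

theorem exists_farey_parents {p q : ℤ} (hp : 0 ≤ p) (hq : 2 ≤ q) (hpq : IsCoprime p q) :
    ∃ a b c d : ℤ, 0 ≤ a ∧ 0 < b ∧ 0 ≤ c ∧ 0 < d ∧ a + c = p ∧ b + d = q ∧ b * c - a * d = 1 := by
  obtain ⟨u, v, huv⟩ := hpq
  -- `b` is the inverse of `p` modulo `q`, taken in `[0, q)`.
  set b := u % q
  have hb0 : 0 ≤ b := Int.emod_nonneg u (by omega)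
  have hbq : b < q := Int.emod_lt_of_pos u (by omega)
  obtain ⟨k, hk⟩ : q ∣ p * b - 1 :=
    ⟨-(p * (u / q) + v), by linear_combination p * Int.emod_add_mul_ediv u q + huv⟩
  have hpb : 0 < p * b := by
    refine (mul_nonneg hp hb0).lt_of_ne fun h => ?_
    have : q ∣ 1 := ⟨-k, by linear_combination -h - hk⟩
    linarith [Int.le_of_dvd one_pos this]
  have hb : 0 < b := pos_of_mul_pos_right hpb hp
  have hk0 : 0 ≤ k := by nlinarith
  have hkp : k < p := by nlinarith [mul_lt_mul_of_pos_left hbq (pos_of_mul_pos_left hpb hb0)]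
  exact ⟨k, b, p - k, q - b, hk0, hb, by omega, by omega, by ring, by ring,
    by linear_combination hk⟩

-- `t` stands for the value at `∞ = 1/0`; `natCast_succ` is the mediant rule for `n/1` and `1/0`.
structure IsMediantMean (f : ℚ → ℝ) (t : ℝ) : Prop where
  mediant : ∀ a b c d : ℤ, 0 ≤ a → 0 < b → 0 < d → b * c - a * d = 1 →
    f ((a + c) / (b + d)) = (f (a / b) + f (c / d)) / 2
  natCast_succ : ∀ n : ℕ, f (n + 1) = (f n + t) / 2

namespace IsMediantMean

variable {f g : ℚ → ℝ} {s t : ℝ}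

theorem sub (hf : IsMediantMean f s) (hg : IsMediantMean g t) : IsMediantMean (f - g) (s - t) where
  mediant a b c d ha hb hd h := by
    simp only [Pi.sub_apply, hf.mediant a b c d ha hb hd h, hg.mediant a b c d ha hb hd h]
    ring
  natCast_succ n := by
    simp only [Pi.sub_apply, hf.natCast_succ, hg.natCast_succ]
    ring

theorem natCast_eq_zero (hf : IsMediantMean f 0) (h0 : f 0 = 0) (n : ℕ) : f n = 0 := by
  induction n with
  | zero => exact_mod_cast h0
  | succ n ih => rw [Nat.cast_succ, hf.natCast_succ, ih]; norm_num

theorem eq_zero_of_nonneg (hf : IsMediantMean f 0) (h0 : f 0 = 0) {x : ℚ} (hx : 0 ≤ x) :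
    f x = 0 := by
  suffices key : ∀ n : ℕ, ∀ p q : ℤ, 0 ≤ p → 0 < q → IsCoprime p q → p + q < n → f (p / q) = 0 by
    have hcop : IsCoprime x.num x.den := Int.isCoprime_iff_gcd_eq_one.mpr x.reduced
    simpa [Rat.num_div_den] using
      key ((x.num + x.den).toNat + 1) x.num x.den (Rat.num_nonneg.mpr hx) (by simp [x.pos]) hcop
        (by omega)
  intro n
  induction n with
  | zero => intro p q hp hq _ hn; omega
  | succ n ih =>
    intro p q hp hq hpq hn
    rcases (show q = 1 ∨ 2 ≤ q by omega) with rfl | hq2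
    · lift p to ℕ using hp
      simpa using hf.natCast_eq_zero h0 p
    · obtain ⟨a, b, c, d, ha, hb, hc, hd, rfl, rfl, hdet⟩ := exists_farey_parents hp hq2 hpq
      have hab : IsCoprime a b := ⟨-d, c, by linear_combination hdet⟩
      have hcd : IsCoprime c d := ⟨b, -a, by linear_combination hdet⟩
      push_cast
      rw [hf.mediant a b c d ha hb hd hdet, ih a b ha hb hab (by omega),
        ih c d hc hd hcd (by omega)]
      norm_num

theorem eqOn_nonneg (hf : IsMediantMean f s) (hg : IsMediantMean g t) (hst : s = t)
    (h0 : f 0 = g 0) {x : ℚ} (hx : 0 ≤ x) : f x = g x := by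
  subst hst
  have hfg : IsMediantMean (f - g) 0 := sub_self s ▸ hf.sub hg
  exact sub_eq_zero.mp (hfg.eq_zero_of_nonneg (sub_eq_zero.mpr h0) hx)

end IsMediantMean

def MediantRule (ψ : WithBot (WithTop ℚ) → ℝ) : Prop :=
  ∀ a b c d : ℤ, 0 < b → 0 < d → b * c - a * d = 1 →
    ψ (rc ((a + c) / (b + d))) = (ψ (rc (a / b)) + ψ (rc (c / d))) / 2

-- `x⁻¹` computed in `ℚ ∪ {±∞}`, where `0⁻¹ = ∞` (and not Lean's `0⁻¹ = 0`).
def rcInv (x : ℚ) : WithBot (WithTop ℚ) := if x = 0 then ⊤ else rc x⁻¹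

theorem rcInv_zero : rcInv 0 = ⊤ := if_pos rfl

theorem rcInv_of_ne_zero {x : ℚ} (hx : x ≠ 0) : rcInv x = rc x⁻¹ := if_neg hx

theorem rcInv_div {p q : ℚ} (hp : p ≠ 0) (hq : q ≠ 0) : rcInv (p / q) = rc (q / p) := by
  rw [rcInv_of_ne_zero (div_ne_zero hp hq), inv_div]

section

variable {ψ : WithBot (WithTop ℚ) → ℝ}

theorem MediantRule.isMediantMean_comp_rc (hψ : MediantRule ψ)
    (htop : ∀ n : ℕ, ψ (rc (n + 1)) = (ψ (rc n) + ψ ⊤) / 2) :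
    IsMediantMean (ψ ∘ rc) (ψ ⊤) where
  mediant a b c d _ hb hd h := hψ a b c d hb hd h
  natCast_succ := htop

theorem MediantRule.isMediantMean_neg (hψ : MediantRule ψ)
    (hbot : ∀ n : ℕ, ψ (rc (-(n + 1))) = (ψ ⊥ + ψ (rc (-n))) / 2) :
    IsMediantMean (fun x => -ψ (rc (-x))) (-ψ ⊥) where
  mediant a b c d _ hb hd h := by
    have h' := hψ (-c) d (-a) b hd hb (by linear_combination h)
    push_cast at h'
    rw [← neg_add, neg_div, neg_div, neg_div, add_comm (c : ℚ), add_comm (d : ℚ)] at h'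
    rw [h']
    ring
  natCast_succ n := by
    rw [hbot n]
    ring

theorem MediantRule.isMediantMean_rcInv (hψ : MediantRule ψ)
    (htop : ∀ n : ℕ, ψ (rc (n + 1)) = (ψ (rc n) + ψ ⊤) / 2) :
    IsMediantMean (fun x => 1 / 2 - ψ (rcInv x)) (1 / 2 - ψ (rc 0)) where
  mediant a b c d ha hb hd h := by
    rcases ha.eq_or_lt with rfl | ha
    · obtain ⟨rfl, rfl⟩ : b = 1 ∧ c = 1 := by
        have hbc : b * c = 1 := by linarith
        have hc : 0 ≤ c := by nlinarith
        exact ⟨Int.eq_one_of_mul_eq_one_right hb.le hbc, Int.eq_one_of_mul_eq_one_left hc hbc⟩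
      lift d to ℕ using hd.le
      have hd0 : (d : ℚ) ≠ 0 := by exact_mod_cast hd.ne'
      push_cast
      rw [zero_add, zero_div, rcInv_zero, add_comm, rcInv_div one_ne_zero (by positivity),
        rcInv_div one_ne_zero hd0, div_one, div_one, htop d]
      ring
    · have hc : 0 < c := by nlinarith
      rw [rcInv_div (by positivity) (by positivity), rcInv_div (by positivity) (by positivity),
        rcInv_div (by positivity) (by positivity), add_comm (b : ℚ), add_comm (a : ℚ),
        hψ d c b a hc ha (by linear_combination h)]
      ring
  natCast_succ n := by
    rcases n.eq_zero_or_pos with rfl | hn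
    · have h1 := htop 0
      rw [Nat.cast_zero, zero_add] at h1 ⊢
      rw [rcInv_zero, rcInv_of_ne_zero one_ne_zero, inv_one, h1]
      ring
    · have hn0 : (n : ℚ) ≠ 0 := by exact_mod_cast hn.ne'
      have h1 := hψ 0 1 1 n one_pos (by exact_mod_cast hn) (by ring)
      push_cast at h1
      rw [zero_add, zero_div, add_comm] at h1
      rw [rcInv_of_ne_zero (by positivity), rcInv_of_ne_zero hn0, inv_eq_one_div,
        inv_eq_one_div, h1]
      ring

end

theorem psi_symmetries_general (ψ : WithBot (WithTop ℚ) → ℝ)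
    (hbot : ψ ⊥ = -(1/2)) (hzero : ψ (rc 0) = 0) (htop : ψ ⊤ = 1/2)
    (hfarey : ∀ p q r s : ℤ, 0 < q → 0 < s → |p * s - r * q| = 1 →
      ψ (rc (((p + r : ℤ) : ℚ) / ((q + s : ℤ) : ℚ))) =
        (ψ (rc ((p : ℚ) / (q : ℚ))) + ψ (rc ((r : ℚ) / (s : ℚ)))) / 2)
    (hbotfarey : ∀ n : ℤ, ψ (rc ((n : ℚ) - 1)) = (ψ ⊥ + ψ (rc (n : ℚ))) / 2)
    (htopfarey : ∀ n : ℤ, ψ (rc ((n : ℚ) + 1)) = (ψ (rc (n : ℚ)) + ψ ⊤) / 2) :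
    (∀ x : ℚ, ψ (rc (-x)) = - ψ (rc x)) ∧ (ψ ⊤ = - ψ ⊥) ∧ (ψ ⊥ = - ψ ⊤) ∧
    (∀ x : ℚ, 0 < x → ψ (rc x⁻¹) = 1/2 - ψ (rc x)) ∧
    (ψ ⊤ = 1/2 - ψ (rc 0)) ∧ (ψ (rc 0) = 1/2 - ψ ⊤) := by
  have hψ : MediantRule ψ := fun a b c d hb hd h => by
    have hdet : |a * d - c * b| = 1 := by
      rw [show a * d - c * b = -1 by linear_combination -h, abs_neg, abs_one]
    exact_mod_cast hfarey a b c d hb hd hdet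
  have htop_nat (n : ℕ) : ψ (rc (n + 1)) = (ψ (rc n) + ψ ⊤) / 2 := by exact_mod_cast htopfarey n
  have hbot_nat (n : ℕ) : ψ (rc (-(n + 1))) = (ψ ⊥ + ψ (rc (-n))) / 2 := by
    rw [neg_add']; exact_mod_cast hbotfarey (-n)
  have hcomp := hψ.isMediantMean_comp_rc htop_nat
  have hneg {x : ℚ} (hx : 0 ≤ x) : -ψ (rc (-x)) = ψ (rc x) :=
    (hψ.isMediantMean_neg hbot_nat).eqOn_nonneg hcomp (by rw [hbot, htop]; norm_num)
      (by simp [hzero]) hx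
  have hinv {x : ℚ} (hx : 0 ≤ x) : 1 / 2 - ψ (rcInv x) = ψ (rc x) :=
    (hψ.isMediantMean_rcInv htop_nat).eqOn_nonneg hcomp (by rw [hzero, htop]; norm_num)
      (by simp [rcInv_zero, hzero, htop]) hx
  refine ⟨fun x => ?_, by norm_num [htop, hbot], by norm_num [htop, hbot], fun x hx => ?_,
    by norm_num [htop, hzero], by norm_num [htop, hzero]⟩
  · rcases le_total 0 x with hx | hx
    · linarith [hneg hx]
    · linarith [neg_neg x ▸ hneg (neg_nonneg.mpr hx)]
  · linarith [rcInv_of_ne_zero hx.ne' ▸ hinv hx.le]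

/-- If `ψ : ℚ ∪ {±∞} → ℝ` is strictly increasing and satisfies `ψ(-∞) = -1/2`,
`ψ(0) = 0`, `ψ(∞) = 1/2` and `ψ(p/q ⊕ r/s) = (ψ(p/q) + ψ(r/s))/2` for consecutive
Farey numbers `p/q` and `r/s` (including the pairs involving `±∞ = ∓1/0`), then
`ψ(-x) = -ψ(x)` for all `x ∈ ℚ ∪ {±∞}` and `ψ(1/x) = 1/2 - ψ(x)` for all
`x ∈ ℚ ∪ {∞}` with `x ≥ 0` (with `1/0 = ∞` and `1/∞ = 0`). -/
theorem psi_symmetries (ψ : WithBot (WithTop ℚ) → ℝ)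
    (hmono : StrictMono ψ)
    (hbot : ψ ⊥ = -(1/2)) (hzero : ψ (rc 0) = 0) (htop : ψ ⊤ = 1/2)
    (hfarey : ∀ p q r s : ℤ, 0 < q → 0 < s → |p * s - r * q| = 1 →
      ψ (rc (((p + r : ℤ) : ℚ) / ((q + s : ℤ) : ℚ))) =
        (ψ (rc ((p : ℚ) / (q : ℚ))) + ψ (rc ((r : ℚ) / (s : ℚ)))) / 2)
    (hbotfarey : ∀ n : ℤ, ψ (rc ((n : ℚ) - 1)) = (ψ ⊥ + ψ (rc (n : ℚ))) / 2)
    (htopfarey : ∀ n : ℤ, ψ (rc ((n : ℚ) + 1)) = (ψ (rc (n : ℚ)) + ψ ⊤) / 2) :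
    (∀ x : ℚ, ψ (rc (-x)) = - ψ (rc x)) ∧ (ψ ⊤ = - ψ ⊥) ∧ (ψ ⊥ = - ψ ⊤) ∧
    (∀ x : ℚ, 0 < x → ψ (rc x⁻¹) = 1/2 - ψ (rc x)) ∧
    (ψ ⊤ = 1/2 - ψ (rc 0)) ∧ (ψ (rc 0) = 1/2 - ψ ⊤) :=
  psi_symmetries_general ψ hbot hzero htop hfarey hbotfarey htopfarey
end
end

section
/- If two elements of PSL(2,ℤ), acting on ℝ ∪ {∞} by Möbius transformations, take the same values at two distinct points of ℚ ∪ {∞}, then they are equal. Equivalently, an element of PSL(2,ℤ) is uniquely determined by its values on two distinct points of ℚ ∪ {∞}. -/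
noncomputable section

/-- The Möbius action of `SL(2,ℤ)` on `ℝ ∪ {∞}`, `x ↦ (a x + b) / (c x + d)`.
Since `±g` act in the same way, this describes the action of `PSL(2,ℤ)`. -/
noncomputable def moebius (g : Matrix.SpecialLinearGroup (Fin 2) ℤ) :
    OnePoint ℝ → OnePoint ℝ :=
  fun x =>
    Option.casesOn x
      (if (g 1 0 : ℤ) = 0 then OnePoint.infty
       else ((((g 0 0 : ℤ) : ℝ) / ((g 1 0 : ℤ) : ℝ) : ℝ) : OnePoint ℝ))
      (fun r : ℝ =>
        if ((g 1 0 : ℤ) : ℝ) * r + ((g 1 1 : ℤ) : ℝ) = 0 then OnePoint.infty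
        else (((((g 0 0 : ℤ) : ℝ) * r + ((g 0 1 : ℤ) : ℝ)) /
              (((g 1 0 : ℤ) : ℝ) * r + ((g 1 1 : ℤ) : ℝ)) : ℝ) : OnePoint ℝ))

/-- The subset `ℚ ∪ {∞}` of `ℝ ∪ {∞}`. -/
def RatOrInf : Set (OnePoint ℝ) :=
  {x | x = OnePoint.infty ∨ ∃ q : ℚ, x = ((q : ℝ) : OnePoint ℝ)}

instance : Fact (Even (Fintype.card (Fin 2))) := ⟨⟨1, rfl⟩⟩

/-!
The action of `GL(2, K)` on `OnePoint K ≃ ℙ¹(K)` is `moebius` for `K = ℝ` and commutes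
with `ℚ ⊆ ℝ`, so `k = h⁻¹ g` fixes two distinct points of `ℙ¹(ℚ)`: it has two independent
rational eigenvectors. Their eigenvalues `s, t` satisfy `s t = det k = 1` and
`s + t = tr k ∈ ℤ`, so they are roots of the monic `X² - (tr k) X + 1`; as `ℤ` is integrally
closed they are integers, hence `s = t = ±1` and `k = ±1`.
-/

open Matrix OnePoint Projectivization
open scoped LinearAlgebra.Projectivization

namespace Matrix

variable {n K : Type*} [Fintype n] [DecidableEq n] [Field K] {M : Matrix n n K} {b : n → n → K}

lemma isUnit_transpose_of_linearIndependent (hb : LinearIndependent K b) : IsUnit (of b)ᵀ :=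
  (isUnit_transpose _).mpr (linearIndependent_rows_iff_isUnit.mp hb)

lemma eq_conj_diagonal_of_eigenbasis {d : n → K} (hb : LinearIndependent K b)
    (h : ∀ j, M *ᵥ b j = d j • b j) : M = (of b)ᵀ * diagonal d * (of b)ᵀ⁻¹ := by
  have hMP : M * (of b)ᵀ = (of b)ᵀ * diagonal d := by
    ext i j
    rw [mul_diagonal]
    simpa [mul_apply, mulVec, dotProduct, mul_comm] using congrFun (h j) i
  rw [← hMP, mul_nonsing_inv_cancel_right]
  exact (isUnit_iff_isUnit_det _).mp (isUnit_transpose_of_linearIndependent hb)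

lemma det_eq_prod_of_eigenbasis {d : n → K} (hb : LinearIndependent K b)
    (h : ∀ j, M *ᵥ b j = d j • b j) : M.det = ∏ i, d i := by
  rw [eq_conj_diagonal_of_eigenbasis hb h, det_conj (isUnit_transpose_of_linearIndependent hb),
    det_diagonal]

lemma trace_eq_sum_of_eigenbasis {d : n → K} (hb : LinearIndependent K b)
    (h : ∀ j, M *ᵥ b j = d j • b j) : M.trace = ∑ i, d i := by
  rw [eq_conj_diagonal_of_eigenbasis hb h, trace_conj (isUnit_transpose_of_linearIndependent hb),
    trace_diagonal]

lemma eq_scalar_of_eigenbasis {c : K} (hb : LinearIndependent K b)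
    (h : ∀ j, M *ᵥ b j = c • b j) : M = scalar n c := by
  rw [eq_conj_diagonal_of_eigenbasis (d := fun _ ↦ c) hb h, ← scalar_apply,
    ← (scalar_commute c (fun _ ↦ mul_comm _ _) _).eq, mul_assoc, mul_nonsing_inv, mul_one]
  exact (isUnit_iff_isUnit_det _).mp (isUnit_transpose_of_linearIndependent hb)

end Matrix

namespace Rat

lemma exists_int_eq_of_mul_eq_one_of_add_eq_int {s t : ℚ} {T : ℤ} (hst : s * t = 1)
    (hT : s + t = T) : ∃ m : ℤ, (m : ℚ) = s := by
  have : IsIntegral ℤ s := by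
    refine ⟨Polynomial.X ^ 2 - Polynomial.C T * Polynomial.X + 1, by monicity!, ?_⟩
    simp only [Polynomial.eval₂_add, Polynomial.eval₂_sub, Polynomial.eval₂_mul,
      Polynomial.eval₂_X_pow, Polynomial.eval₂_C, Polynomial.eval₂_X, Polynomial.eval₂_one]
    linear_combination s * hT - hst
  exact IsIntegrallyClosed.isIntegral_iff.mp this

lemma eq_one_or_neg_one_of_mul_eq_one_of_add_eq_int {s t : ℚ} {T : ℤ} (hst : s * t = 1)
    (hT : s + t = T) : s = 1 ∧ t = 1 ∨ s = -1 ∧ t = -1 := by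
  obtain ⟨m, rfl⟩ := exists_int_eq_of_mul_eq_one_of_add_eq_int hst hT
  obtain ⟨n, rfl⟩ := exists_int_eq_of_mul_eq_one_of_add_eq_int (t := (m : ℚ))
    (by rwa [mul_comm]) (by rwa [add_comm])
  rcases Int.eq_one_or_neg_one_of_mul_eq_one' (u := m) (v := n) (by exact_mod_cast hst) with
    ⟨rfl, rfl⟩ | ⟨rfl, rfl⟩ <;> simp

end Rat

lemma Projectivization.exists_mulVec_rep_eq_smul_of_smul_eq_self {n K : Type*} [Fintype n]
    [DecidableEq n] [Field K] {g : GL n K} {P : ℙ K (n → K)} (h : g • P = P) :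
    ∃ a : K, (g : Matrix n n K) *ᵥ P.rep = a • P.rep := by
  rw [← mk_rep P, smul_mk, mk_eq_mk_iff'] at h
  obtain ⟨a, ha⟩ := h
  exact ⟨a, by simpa [Units.smul_def] using ha.symm⟩

lemma OnePoint.map_injective {X Y : Type*} {f : X → Y} (hf : Function.Injective f) :
    Function.Injective (OnePoint.map f) :=
  Option.map_injective hf

namespace Matrix.SpecialLinearGroup

lemma eq_one_or_neg_one_of_eigenbasis {k : SpecialLinearGroup (Fin 2) ℤ}
    {b : Fin 2 → Fin 2 → ℚ} {d : Fin 2 → ℚ} (hb : LinearIndependent ℚ b)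
    (h : ∀ j, (mapGL ℚ k : Matrix (Fin 2) (Fin 2) ℚ) *ᵥ b j = d j • b j) :
    k = 1 ∨ k = -1 := by
  have hdet : d 0 * d 1 = 1 := by
    rw [← Fin.prod_univ_two, ← det_eq_prod_of_eigenbasis hb h]
    exact (map (algebraMap ℤ ℚ) k).prop
  have htr : d 0 + d 1 = (k : Matrix (Fin 2) (Fin 2) ℤ).trace := by
    rw [← Fin.sum_univ_two, ← trace_eq_sum_of_eigenbasis hb h]
    simp [trace]
  have hscalar (ε : ℚ) (hε : ∀ j, d j = ε) : (mapGL ℚ k : Matrix (Fin 2) (Fin 2) ℚ) = scalar _ ε :=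
    eq_scalar_of_eigenbasis hb fun j ↦ hε j ▸ h j
  rcases Rat.eq_one_or_neg_one_of_mul_eq_one_of_add_eq_int hdet htr with ⟨h0, h1⟩ | ⟨h0, h1⟩
  · left
    refine mapGL_injective (S := ℚ) (Units.ext ?_)
    rw [hscalar 1 (Fin.forall_fin_two.mpr ⟨h0, h1⟩)]
    simp
  · right
    refine mapGL_injective (S := ℚ) (Units.ext ?_)
    rw [hscalar (-1) (Fin.forall_fin_two.mpr ⟨h0, h1⟩)]
    simp [← diagonal_one, diagonal_neg]

lemma eq_one_or_neg_one_of_smul_eq_self {k : SpecialLinearGroup (Fin 2) ℤ} {p q : OnePoint ℚ}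
    (hpq : p ≠ q) (hp : mapGL ℚ k • p = p) (hq : mapGL ℚ k • q = q) : k = 1 ∨ k = -1 := by
  set P := equivProjectivization ℚ p
  set Q := equivProjectivization ℚ q
  have hPQ : LinearIndependent ℚ ![P.rep, Q.rep] :=
    linearIndependent_pair_iff_ne.mpr ((equivProjectivization ℚ).injective.ne hpq)
  obtain ⟨a, ha⟩ := exists_mulVec_rep_eq_smul_of_smul_eq_self (P := P)
    (by rw [← equivProjectivization_smul, hp])
  obtain ⟨c, hc⟩ := exists_mulVec_rep_eq_smul_of_smul_eq_self (P := Q)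
    (by rw [← equivProjectivization_smul, hq])
  exact eq_one_or_neg_one_of_eigenbasis (d := ![a, c]) hPQ (Fin.forall_fin_two.mpr ⟨ha, hc⟩)

end Matrix.SpecialLinearGroup

open Matrix.SpecialLinearGroup

lemma moebius_eq_smul (g : SpecialLinearGroup (Fin 2) ℤ) (x : OnePoint ℝ) :
    moebius g x = mapGL ℝ g • x := by
  cases x with
  | infty => rw [smul_infty_eq_ite]; simp [moebius, OnePoint.infty]
  | coe r => rw [smul_some_eq_ite]; rfl

lemma moebius_map_rat (g : SpecialLinearGroup (Fin 2) ℤ) (p : OnePoint ℚ) :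
    moebius g (p.map (Rat.castHom ℝ)) = (mapGL ℚ g • p).map (Rat.castHom ℝ) := by
  have hmap : (mapGL ℚ g).map (Rat.castHom ℝ) = mapGL ℝ g := by
    ext i j
    simp
  rw [moebius_eq_smul, OnePoint.map_smul, hmap]

lemma moebius_map_rat_eq_iff (g h : SpecialLinearGroup (Fin 2) ℤ) (p : OnePoint ℚ) :
    moebius g (p.map (Rat.castHom ℝ)) = moebius h (p.map (Rat.castHom ℝ)) ↔
      mapGL ℚ (h⁻¹ * g) • p = p := by
  rw [moebius_map_rat, moebius_map_rat, (OnePoint.map_injective (Rat.castHom ℝ).injective).eq_iff,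
    map_mul, mul_smul, map_inv, inv_smul_eq_iff]

lemma ratOrInf_eq_range_map : RatOrInf = Set.range (OnePoint.map (Rat.castHom ℝ)) := by
  ext x
  constructor
  · rintro (rfl | ⟨q, rfl⟩)
    · exact ⟨∞, rfl⟩
    · exact ⟨q, rfl⟩
  · rintro ⟨p | q, rfl⟩
    · exact .inl rfl
    · exact .inr ⟨q, rfl⟩

/-- An element of `PSL(2,ℤ)` is uniquely determined by its values on two distinct
points of `ℚ ∪ {∞}`: if two elements of `SL(2,ℤ)` act in the same way on two distinct
points of `ℚ ∪ {∞}`, then they agree up to sign, i.e. they define the same element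
of `PSL(2,ℤ)`. -/
theorem moebius_eq_of_two_points (g h : Matrix.SpecialLinearGroup (Fin 2) ℤ)
    (x y : OnePoint ℝ) (hx : x ∈ RatOrInf) (hy : y ∈ RatOrInf) (hxy : x ≠ y)
    (h1 : moebius g x = moebius h x) (h2 : moebius g y = moebius h y) :
    g = h ∨ g = -h := by
  rw [ratOrInf_eq_range_map] at hx hy
  obtain ⟨p, rfl⟩ := hx
  obtain ⟨q, rfl⟩ := hy
  rw [moebius_map_rat_eq_iff] at h1 h2
  rcases eq_one_or_neg_one_of_smul_eq_self (ne_of_apply_ne _ hxy) h1 h2 with hk | hk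
  · exact .inl (inv_mul_eq_one.mp hk).symm
  · exact .inr (by simpa using inv_mul_eq_iff_eq_mul.mp hk)
end
end
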